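/- arXiv:math/0309134 — 6 statements merged into one kernel-verified Lean document; each statement's English description precedes it below -/
import Mathlib

section
/- Let G be an abelian group, let F : G → G be a group automorphism, and let n be a positive integer. Assume that the map G → G, x ↦ F^n(x)·x⁻¹, is surjective. Then the norm map N_{F^n/F} : G → G defined by N_{F^n/F}(x) = x·F(x)·F²(x)···F^{n−1}(x) sends the fixed subgroup G^{F^n} = {x ∈ G : F^n(x) = x} into G^F = {x ∈ G : F(x) = x}, and its restriction N_{F^n/F} : G^{F^n} → G^F is a surjective group homomorphism. -/
/-- For an abelian group `G`, an automorphism `F` of `G` and `n > 0` such that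
`x ↦ Fⁿ(x)·x⁻¹` is surjective, the norm map `N(x) = x·F(x)···F^{n-1}(x)` sends the fixed
subgroup of `Fⁿ` into the fixed subgroup of `F`, and the restriction is a surjective group
homomorphism. -/
theorem norm_map_surjective_on_fixed_points
    {G : Type*} [CommGroup G] (F : MulAut G) (n : ℕ) (hn : 0 < n)
    (hsurj : Function.Surjective fun x : G => (F ^ n) x * x⁻¹) :
    (∀ x : G, (F ^ n) x = x →
        F (∏ i ∈ Finset.range n, (F ^ i) x) = ∏ i ∈ Finset.range n, (F ^ i) x) ∧
    (∀ x y : G, (F ^ n) x = x → (F ^ n) y = y →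
        (∏ i ∈ Finset.range n, (F ^ i) (x * y)) =
          (∏ i ∈ Finset.range n, (F ^ i) x) * ∏ i ∈ Finset.range n, (F ^ i) y) ∧
    (∀ y : G, F y = y →
        ∃ x : G, (F ^ n) x = x ∧ (∏ i ∈ Finset.range n, (F ^ i) x) = y) := by
  have key : ∀ z : G, (∏ i ∈ Finset.range n, (F ^ i) (F z * z⁻¹)) = (F ^ n) z * z⁻¹ := by
    intro z
    have h : ∀ i, (F ^ i) (F z * z⁻¹) = (F ^ (i + 1)) z / (F ^ i) z := by
      intro i
      rw [map_mul, map_inv, div_eq_mul_inv]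
      congr 1
    simp_rw [h]
    rw [Finset.prod_range_div (fun i => (F ^ i) z) n]
    simp [div_eq_mul_inv]
  have shift : ∀ x : G, F (∏ i ∈ Finset.range n, (F ^ i) x) =
      ((F ^ n) x * x⁻¹) * ∏ i ∈ Finset.range n, (F ^ i) x := by
    intro x
    rw [map_prod]
    have h : ∀ i, F ((F ^ i) x) = ((F ^ (i + 1)) x / (F ^ i) x) * (F ^ i) x := by
      intro i
      rw [div_mul_cancel, ← MulAut.mul_apply, ← pow_succ']
    simp_rw [h]
    rw [Finset.prod_mul_distrib, Finset.prod_range_div (fun i => (F ^ i) x) n]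
    simp [div_eq_mul_inv]
  refine ⟨?_, ?_, ?_⟩
  · intro x hx
    rw [shift, hx, mul_inv_cancel, one_mul]
  · intro x y _ _
    simp [map_mul, Finset.prod_mul_distrib]
  · intro y hy
    obtain ⟨z, hz⟩ := hsurj y
    simp only at hz
    refine ⟨F z * z⁻¹, ?_, ?_⟩
    · have hz' : (F ^ n) z = y * z := by rw [← hz]; group
      rw [map_mul, map_inv, ← MulAut.mul_apply, ← pow_succ, pow_succ', MulAut.mul_apply,
        hz', map_mul, hy]
      simp [mul_inv, mul_comm, mul_left_comm, mul_assoc]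
    · rw [key z, hz]
end

section
/- Let G be an abelian group, F : G → G a group automorphism and n a positive integer. Assume that both maps x ↦ F(x)·x⁻¹ and x ↦ F^n(x)·x⁻¹ from G to G are surjective, and that the fixed subgroups G^F and G^{F^n} are finite. Then F restricts to an automorphism of G^{F^n}, and the map ψ ↦ ψ ∘ N_{F^n/F} is an injective group homomorphism from Hom(G^F, ℂˣ) to Hom(G^{F^n}, ℂˣ) whose image is exactly the set of those homomorphisms ψ' : G^{F^n} → ℂˣ satisfying ψ' ∘ F = ψ' on G^{F^n}. -/
/-- The fixed subgroup `G^F = {x : F x = x}` of an automorphism `F` of an abelian group. -/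
def fixedSubgroup {G : Type*} [CommGroup G] (F : MulAut G) : Subgroup G where
  carrier := {x | F x = x}
  one_mem' := map_one F
  mul_mem' := by
    intro a b ha hb
    simp only [Set.mem_setOf_eq, map_mul] at *
    rw [ha, hb]
  inv_mem' := by
    intro a ha
    simp only [Set.mem_setOf_eq, map_inv] at *
    rw [ha]

/-- The norm map `N_{Fⁿ/F}(x) = x·F(x)·F²(x)···F^{n-1}(x)`, as a homomorphism `G →* G`. -/
def langNormHom {G : Type*} [CommGroup G] (F : MulAut G) (n : ℕ) : G →* G where
  toFun x := ∏ i ∈ Finset.range n, (F ^ i) x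
  map_one' := by simp
  map_mul' x y := by
    simp only [map_mul]
    rw [Finset.prod_mul_distrib]

lemma langNormHom_fixed {G : Type*} [CommGroup G] (F : MulAut G) (n : ℕ)
    (x : G) (hx : (F ^ n) x = x) : F (langNormHom F n x) = langNormHom F n x := by
  show F (∏ i ∈ Finset.range n, (F ^ i) x) = ∏ i ∈ Finset.range n, (F ^ i) x
  rw [map_prod]
  have h1 : ∀ i : ℕ, F ((F ^ i) x) = (F ^ (i + 1)) x := by
    intro i
    rw [pow_succ']
    rfl
  calc (∏ i ∈ Finset.range n, F ((F ^ i) x))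
      = ∏ i ∈ Finset.range n, (F ^ (i + 1)) x := by
        exact Finset.prod_congr rfl fun i _ => h1 i
    _ = (∏ i ∈ Finset.range (n + 1), (F ^ i) x) * ((F ^ (0 : ℕ)) x)⁻¹ := by
        rw [Finset.prod_range_succ']
        simp
    _ = (∏ i ∈ Finset.range n, (F ^ i) x) * (F ^ n) x * ((F ^ (0 : ℕ)) x)⁻¹ := by
        rw [Finset.prod_range_succ]
    _ = ∏ i ∈ Finset.range n, (F ^ i) x := by
        rw [hx]; simp

/-- The norm map restricted to a homomorphism `G^{Fⁿ} →* G^F`. -/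
def normRes {G : Type*} [CommGroup G] (F : MulAut G) (n : ℕ) :
    fixedSubgroup (F ^ n) →* fixedSubgroup F where
  toFun x := ⟨langNormHom F n x.1, langNormHom_fixed F n x.1 x.2⟩
  map_one' := by
    ext
    simp
  map_mul' x y := by
    ext
    simp [map_mul]

/-- `F` restricted to the fixed subgroup of `Fⁿ` (it maps this subgroup into itself). -/
def autRes {G : Type*} [CommGroup G] (F : MulAut G) (n : ℕ) :
    fixedSubgroup (F ^ n) →* fixedSubgroup (F ^ n) where
  toFun x := ⟨F x.1, by
    have hx : (F ^ n) x.1 = x.1 := x.2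
    show (F ^ n) (F x.1) = F x.1
    have : (F ^ n) (F x.1) = (F ^ (n + 1)) x.1 := by rw [pow_succ]; rfl
    rw [this, pow_succ']
    show F ((F ^ n) x.1) = F x.1
    rw [hx]⟩
  map_one' := by ext; simp
  map_mul' x y := by ext; simp [map_mul]

section Aux

variable {G : Type*} [CommGroup G] (F : MulAut G) (n : ℕ)

lemma langNormHom_shift (x : G) :
    langNormHom F n (F x) = langNormHom F n x * ((F ^ n) x * x⁻¹) := by
  show (∏ i ∈ Finset.range n, (F ^ i) (F x)) = _
  have h1 : ∀ i : ℕ, (F ^ i) (F x) = (F ^ (i + 1)) x := by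
    intro i
    rw [pow_succ]
    rfl
  calc (∏ i ∈ Finset.range n, (F ^ i) (F x))
      = ∏ i ∈ Finset.range n, (F ^ (i + 1)) x :=
        Finset.prod_congr rfl fun i _ => h1 i
    _ = (∏ i ∈ Finset.range (n + 1), (F ^ i) x) * ((F ^ (0 : ℕ)) x)⁻¹ := by
        rw [Finset.prod_range_succ']
        simp
    _ = (∏ i ∈ Finset.range n, (F ^ i) x) * (F ^ n) x * ((F ^ (0 : ℕ)) x)⁻¹ := by
        rw [Finset.prod_range_succ]
    _ = langNormHom F n x * ((F ^ n) x * x⁻¹) := by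
        show _ = (∏ i ∈ Finset.range n, (F ^ i) x) * _
        simp [mul_assoc]

lemma langNormHom_lang (x : G) :
    langNormHom F n (F x * x⁻¹) = (F ^ n) x * x⁻¹ := by
  rw [map_mul, map_inv, langNormHom_shift, mul_comm, ← mul_assoc, inv_mul_cancel, one_mul]

lemma fixed_le_fixed_pow : fixedSubgroup F ≤ fixedSubgroup (F ^ n) := by
  intro x hx
  have hx' : F x = x := hx
  show (F ^ n) x = x
  induction n with
  | zero => rfl
  | succ k ih =>
      rw [pow_succ]
      show (F ^ k) (F x) = x
      rw [hx', ih]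

lemma normRes_surjective (hn : 0 < n)
    (h1 : Function.Surjective fun x : G => F x * x⁻¹)
    (hf1 : Finite (fixedSubgroup F)) (hf2 : Finite (fixedSubgroup (F ^ n))) :
    Function.Surjective (normRes F n) := by
  set H := fixedSubgroup (F ^ n) with hH
  set φ : H →* H := autRes F n / MonoidHom.id H with hφ
  have hφ_apply : ∀ x : H, (φ x : G) = F (x : G) * (x : G)⁻¹ := by
    intro x
    have : φ x = autRes F n x / x := rfl
    rw [this, div_eq_mul_inv]
    rfl
  -- kernel of normRes equals range of φ
  have hker : (normRes F n).ker = φ.range := by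
    ext x
    constructor
    · intro hx
      have hx1 : langNormHom F n (x : G) = 1 := congrArg Subtype.val hx
      obtain ⟨c, hc⟩ := h1 (x : G)
      have hc' : F c * c⁻¹ = (x : G) := hc
      have hcH : c ∈ H := by
        show (F ^ n) c = c
        have h := langNormHom_lang F n c
        rw [hc', hx1] at h
        exact mul_inv_eq_one.mp h.symm
      exact ⟨⟨c, hcH⟩, Subtype.ext (by rw [hφ_apply]; exact hc')⟩
    · rintro ⟨c, rfl⟩
      rw [MonoidHom.mem_ker]
      refine Subtype.ext ?_
      show langNormHom F n ((φ c : G)) = 1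
      rw [hφ_apply, langNormHom_lang]
      have hc : (F ^ n) (c : G) = (c : G) := c.2
      rw [hc, mul_inv_cancel]
  -- kernel of φ has the same cardinality as fixedSubgroup F
  have hkerφ : Nat.card φ.ker = Nat.card (fixedSubgroup F) := by
    refine Nat.card_congr ⟨fun x => ⟨((x : H) : G), ?_⟩,
      fun a => ⟨⟨(a : G), fixed_le_fixed_pow F n a.2⟩, ?_⟩, fun x => rfl, fun a => rfl⟩
    · have hx0 : φ (x : H) = 1 := x.2
      have hx : (φ (x : H) : G) = 1 := congrArg Subtype.val hx0
      rw [hφ_apply] at hx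
      exact mul_inv_eq_one.mp hx
    · rw [MonoidHom.mem_ker]
      refine Subtype.ext ?_
      rw [hφ_apply]
      exact mul_inv_eq_one.mpr a.2
  -- counting
  have c1 : Nat.card H = Nat.card (normRes F n).range * Nat.card (normRes F n).ker := by
    rw [Subgroup.card_eq_card_quotient_mul_card_subgroup (normRes F n).ker,
      Nat.card_congr (QuotientGroup.quotientKerEquivRange (normRes F n)).toEquiv]
  have c2 : Nat.card H = Nat.card φ.range * Nat.card φ.ker := by
    rw [Subgroup.card_eq_card_quotient_mul_card_subgroup φ.ker,
      Nat.card_congr (QuotientGroup.quotientKerEquivRange φ).toEquiv]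
  have hpos : 0 < Nat.card φ.range := Nat.card_pos
  have hcard : Nat.card (normRes F n).range = Nat.card (fixedSubgroup F) := by
    rw [← hkerφ]
    have := c1.symm.trans c2
    rw [hker] at this
    exact Nat.eq_of_mul_eq_mul_left hpos (by linarith [this])
  have : (normRes F n).range = ⊤ := Subgroup.eq_top_of_card_eq _ hcard
  exact MonoidHom.range_eq_top.mp this

end Aux

/-- if the Lang maps of `F` and `Fⁿ` are surjective and the fixed subgroups
`G^F`, `G^{Fⁿ}` are finite, then `F` restricts to an automorphism of `G^{Fⁿ}`, and
`ψ ↦ ψ ∘ N_{Fⁿ/F}` is an injective group homomorphism `Hom(G^F, ℂˣ) → Hom(G^{Fⁿ}, ℂˣ)`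
whose image is exactly the set of `ψ'` with `ψ' ∘ F = ψ'`. -/
theorem norm_map_dual_characterization
    {G : Type*} [CommGroup G] (F : MulAut G) (n : ℕ) (hn : 0 < n)
    (h1 : Function.Surjective fun x : G => F x * x⁻¹)
    (h2 : Function.Surjective fun x : G => (F ^ n) x * x⁻¹)
    (hf1 : Finite (fixedSubgroup F)) (hf2 : Finite (fixedSubgroup (F ^ n))) :
    Function.Bijective (autRes F n) ∧
    Function.Injective
      (fun ψ : fixedSubgroup F →* ℂˣ => ψ.comp (normRes F n)) ∧
    (∀ ψ ψ' : fixedSubgroup F →* ℂˣ,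
      (ψ * ψ').comp (normRes F n) = ψ.comp (normRes F n) * ψ'.comp (normRes F n)) ∧
    Set.range (fun ψ : fixedSubgroup F →* ℂˣ => ψ.comp (normRes F n)) =
      {ψ' : fixedSubgroup (F ^ n) →* ℂˣ | ψ'.comp (autRes F n) = ψ'} := by
  have hsurj : Function.Surjective (normRes F n) := normRes_surjective F n hn h1 hf1 hf2
  have hNF : ∀ x : fixedSubgroup (F ^ n), normRes F n (autRes F n x) = normRes F n x := by
    intro x
    refine Subtype.ext ?_
    show langNormHom F n (F (x : G)) = langNormHom F n (x : G)
    rw [langNormHom_shift]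
    have hx : (F ^ n) (x : G) = (x : G) := x.2
    rw [hx, mul_inv_cancel, mul_one]
  refine ⟨?_, ?_, ?_, ?_⟩
  · rw [← Finite.injective_iff_bijective]
    intro x y hxy
    exact Subtype.ext (F.injective (congrArg Subtype.val hxy))
  · intro ψ1 ψ2 h
    refine MonoidHom.ext fun a => ?_
    obtain ⟨x, rfl⟩ := hsurj a
    exact DFunLike.congr_fun h x
  · intro ψ ψ'
    rfl
  · ext ψ'
    constructor
    · rintro ⟨ψ, rfl⟩
      refine MonoidHom.ext fun x => ?_
      show ψ (normRes F n (autRes F n x)) = ψ (normRes F n x)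
      rw [hNF]
    · intro hψ'
      have hψ'' : ∀ x, ψ' (autRes F n x) = ψ' x := fun x => DFunLike.congr_fun hψ' x
      have hkerle : (normRes F n).ker ≤ ψ'.ker := by
        intro x hx
        have hx1 : langNormHom F n (x : G) = 1 := congrArg Subtype.val hx
        obtain ⟨c, hc⟩ := h1 (x : G)
        have hc' : F c * c⁻¹ = (x : G) := hc
        have hcH : c ∈ fixedSubgroup (F ^ n) := by
          show (F ^ n) c = c
          have h := langNormHom_lang F n c
          rw [hc', hx1] at h
          exact mul_inv_eq_one.mp h.symm
        have hxc : x = autRes F n ⟨c, hcH⟩ * (⟨c, hcH⟩ : fixedSubgroup (F ^ n))⁻¹ :=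
          Subtype.ext hc'.symm
        rw [MonoidHom.mem_ker, hxc, map_mul, map_inv, hψ'' ⟨c, hcH⟩, mul_inv_cancel]
      let e := QuotientGroup.quotientKerEquivOfSurjective _ hsurj
      refine ⟨(QuotientGroup.lift _ ψ' hkerle).comp e.symm.toMonoidHom, ?_⟩
      refine MonoidHom.ext fun x => ?_
      show (QuotientGroup.lift _ ψ' hkerle) (e.symm (normRes F n x)) = ψ' x
      have he : e.symm (normRes F n x) = QuotientGroup.mk x := by
        apply e.injective
        rw [MulEquiv.apply_symm_apply]
        rfl
      rw [he]
      rfl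
end

section
/- Let k be a field and let g ∈ GL₂(A) be the upper triangular matrix with diagonal entries a, d ∈ Aˣ and upper-right entry b ∈ A (lower-left entry 0). If a − d is a unit of A, then Fib(g) has exactly two elements. -/
set_option maxHeartbeats 1000000


open Matrix
open scoped DualNumber

/-- A submodule `V` of `A²` (where `A = k[ε]` is the ring of dual numbers) is free of
rank 1 if it is generated by a vector `v ∉ ε·A²`. -/
def IsFreeRankOne {k : Type*} [Field k]
    (V : Submodule (DualNumber k) (Fin 2 → DualNumber k)) : Prop :=
  ∃ v : Fin 2 → DualNumber k,
    (¬ ∃ u : Fin 2 → DualNumber k, v = (ε : DualNumber k) • u) ∧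
    V = Submodule.span (DualNumber k) {v}

/-- `Fib g` is the set of free rank-1 `A`-submodules `V₂` of `A²` with `g·V₂ = V₂`. -/
def Fib {k : Type*} [Field k] (g : GL (Fin 2) (DualNumber k)) :
    Set (Submodule (DualNumber k) (Fin 2 → DualNumber k)) :=
  {V | IsFreeRankOne V ∧
    Submodule.map (Matrix.mulVecLin (g : Matrix (Fin 2) (Fin 2) (DualNumber k))) V = V}

section Aux

variable {k : Type*} [Field k]

lemma dn_isUnit_iff (x : DualNumber k) : IsUnit x ↔ x.fst ≠ 0 := by
  rw [TrivSqZeroExt.isUnit_iff_isUnit_fst, isUnit_iff_ne_zero]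

lemma dn_sq_zero {x : DualNumber k} (h : x.fst = 0) : x * x = 0 := by
  apply TrivSqZeroExt.ext <;>
    simp [TrivSqZeroExt.fst_mul, TrivSqZeroExt.snd_mul, h]

lemma eps_dvd_iff (v : Fin 2 → DualNumber k) :
    (∃ u : Fin 2 → DualNumber k, v = (ε : DualNumber k) • u) ↔ ∀ i, (v i).fst = 0 := by
  constructor
  · rintro ⟨u, rfl⟩ i
    simp [TrivSqZeroExt.fst_mul]
  · intro h
    refine ⟨fun i => TrivSqZeroExt.inl (v i).snd, funext fun i => ?_⟩
    apply TrivSqZeroExt.ext <;>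
      simp [TrivSqZeroExt.fst_mul, TrivSqZeroExt.snd_mul, h i]

end Aux

/-- if `g ∈ GL₂(k[ε])` is upper triangular with diagonal entries the units
`a, d` and upper-right entry `b`, and `a − d` is a unit, then `Fib g` has exactly two
elements. -/
theorem fib_card_of_unit_diag_difference {k : Type*} [Field k]
    (a d b : DualNumber k) (ha : IsUnit a) (hd : IsUnit d)
    (g : GL (Fin 2) (DualNumber k))
    (hg : (g : Matrix (Fin 2) (Fin 2) (DualNumber k)) = !![a, b; 0, d])
    (had : IsUnit (a - d)) :
    Nat.card (Fib g) = 2 := by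
  set e0 : Fin 2 → DualNumber k := ![1, 0] with he0
  set w : Fin 2 → DualNumber k := ![-(↑had.unit⁻¹ * b), 1] with hw
  have hui : (↑had.unit⁻¹ : DualNumber k) * (a - d) = 1 := had.val_inv_mul
  have hgv : ∀ v : Fin 2 → DualNumber k,
      (g : Matrix (Fin 2) (Fin 2) (DualNumber k)).mulVecLin v = ![a * v 0 + b * v 1, d * v 1] := by
    intro v
    rw [hg]
    funext i
    fin_cases i <;>
      simp [Matrix.mulVecLin_apply, Matrix.mulVec, dotProduct, Fin.sum_univ_two]
  have key : Fib g = {Submodule.span (DualNumber k) {e0}, Submodule.span (DualNumber k) {w}} := by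
    ext V
    constructor
    · rintro ⟨⟨v, hv, rfl⟩, hmap⟩
      have hvmem : (g : Matrix (Fin 2) (Fin 2) (DualNumber k)).mulVecLin v ∈ Submodule.span (DualNumber k) {v} := by
        have h' := Submodule.mem_map_of_mem (f := (g : Matrix (Fin 2) (Fin 2) (DualNumber k)).mulVecLin)
          (Submodule.mem_span_singleton_self v)
        rwa [hmap] at h'
      rw [Submodule.mem_span_singleton] at hvmem
      obtain ⟨c, hc⟩ := hvmem
      rw [hgv v] at hc
      simp only [Set.mem_insert_iff, Set.mem_singleton_iff]
      have h0 : c * v 0 = a * v 0 + b * v 1 := by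
        have := congrFun hc 0; simpa using this
      have h1 : c * v 1 = d * v 1 := by
        have := congrFun hc 1; simpa using this
      by_cases hv1 : IsUnit (v 1)
      · right
        have h2 : (a - d) * v 0 = -(b * v 1) := by
          have hcd : c = d := by
            have h1' : v 1 * c = v 1 * d := by linear_combination h1
            exact hv1.mul_left_cancel h1'
          rw [hcd] at h0
          linear_combination -h0
        have hv0 : v 0 = v 1 * (-(↑had.unit⁻¹ * b)) := by
          linear_combination (↑had.unit⁻¹ : DualNumber k) * h2 - v 0 * hui
        have hvw : v = v 1 • w := by
          funext i
          fin_cases i <;> simp [hw, hv0]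
        rw [hvw]
        exact Submodule.span_singleton_smul_eq hv1 w
      · left
        have hv1f : (v 1).fst = 0 := by
          by_contra h
          exact hv1 ((dn_isUnit_iff _).mpr h)
        have hv0u : IsUnit (v 0) := by
          rw [dn_isUnit_iff]
          intro h
          exact hv ((eps_dvd_iff v).mpr (by
            intro i
            fin_cases i
            · exact h
            · exact hv1f))
        have hsq : v 1 * v 1 = 0 := dn_sq_zero hv1f
        have hz : (a - d) * (v 0 * v 1) = 0 := by
          linear_combination v 0 * h1 - v 1 * h0 - b * hsq
        have hz2 : v 0 * v 1 = 0 := by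
          linear_combination (↑had.unit⁻¹ : DualNumber k) * hz - (v 0 * v 1) * hui
        have hv1z : v 1 = 0 := by
          have : v 0 * v 1 = v 0 * 0 := by rw [mul_zero]; exact hz2
          exact hv0u.mul_left_cancel this
        have hvw : v = v 0 • e0 := by
          funext i
          fin_cases i <;> simp [he0, hv1z]
        rw [hvw]
        exact Submodule.span_singleton_smul_eq hv0u e0
    · intro hV
      rcases hV with rfl | rfl
      · refine ⟨⟨e0, ?_, rfl⟩, ?_⟩
        · rw [eps_dvd_iff]
          intro h
          have := h 0
          simp [he0] at this
        · rw [Submodule.map_span, Set.image_singleton]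
          have : (g : Matrix (Fin 2) (Fin 2) (DualNumber k)).mulVecLin e0 = a • e0 := by
            rw [hgv e0]
            funext i
            fin_cases i <;> simp [he0]
          rw [this, Submodule.span_singleton_smul_eq ha]
      · refine ⟨⟨w, ?_, rfl⟩, ?_⟩
        · rw [eps_dvd_iff]
          intro h
          have := h 1
          simp [hw] at this
        · rw [Submodule.map_span, Set.image_singleton]
          have : (g : Matrix (Fin 2) (Fin 2) (DualNumber k)).mulVecLin w = d • w := by
            rw [hgv w]
            funext i
            fin_cases i <;> simp [hw]
            linear_combination (-b) * hui
          rw [this, Submodule.span_singleton_smul_eq hd]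
  have hne : Submodule.span (DualNumber k) {e0} ≠ Submodule.span (DualNumber k) {w} := by
    intro h
    have hwmem : w ∈ Submodule.span (DualNumber k) {e0} := by
      rw [h]; exact Submodule.mem_span_singleton_self w
    rw [Submodule.mem_span_singleton] at hwmem
    obtain ⟨c, hc⟩ := hwmem
    have := congrFun hc 1
    simp [hw, he0] at this
  rw [key, Nat.card_coe_set_eq, Set.ncard_pair hne]
end

section
/- Let k = 𝔽_q be the finite field with q elements and let g ∈ GL₂(A) be the upper triangular matrix with diagonal entries a, d ∈ Aˣ and upper-right entry b ∈ A. If a − d ∈ εA and b is a unit of A, then Fib(g) has exactly q elements. -/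
open Matrix
open scoped DualNumber

open TrivSqZeroExt in
/-- The candidate fixed submodules. -/
private def fibAux {k : Type*} [Field k] (c : k) :
    Submodule (DualNumber k) (Fin 2 → DualNumber k) :=
  Submodule.span (DualNumber k) {![1, inr c]}

open TrivSqZeroExt in
private lemma fibAux_mem {k : Type*} [Field k]
    (a d b : DualNumber k) (ha : IsUnit a)
    (g : GL (Fin 2) (DualNumber k))
    (hg : (g : Matrix (Fin 2) (Fin 2) (DualNumber k)) = !![a, b; 0, d])
    (hafst : fst a = fst d) (c : k) : fibAux c ∈ Fib g := by
  have hmv : (g : Matrix (Fin 2) (Fin 2) (DualNumber k)).mulVecLin ![1, inr c]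
      = (a + b * inr c) • ![1, inr c] := by
    funext i
    fin_cases i <;>
      refine TrivSqZeroExt.ext ?_ ?_ <;>
        simp [hg, Matrix.mulVec, dotProduct, Fin.sum_univ_two, hafst, mul_comm]
  constructor
  · refine ⟨![1, inr c], ?_, rfl⟩
    rintro ⟨u, hu⟩
    have h0 := congrFun hu 0
    have := congrArg fst h0
    simp at this
  · rw [fibAux, Submodule.map_span, Set.image_singleton, hmv]
    refine Submodule.span_singleton_smul_eq ?_ _
    rw [isUnit_iff_isUnit_fst] at ha ⊢
    simpa using ha

open TrivSqZeroExt in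
private lemma fibAux_inj {k : Type*} [Field k] : Function.Injective (fibAux (k := k)) := by
  intro c c' h
  have hmem : ![1, inr c'] ∈ fibAux (k := k) c := by
    rw [h]; exact Submodule.mem_span_singleton_self _
  obtain ⟨u, hu⟩ := Submodule.mem_span_singleton.mp hmem
  have h0 := congrFun hu 0
  have h1 := congrFun hu 1
  simp only [Pi.smul_apply, Matrix.cons_val_zero, Matrix.cons_val_one, Matrix.head_cons,
    smul_eq_mul, mul_one] at h0 h1
  rw [h0, one_mul] at h1
  exact inr_injective h1

open TrivSqZeroExt in
private lemma fibAux_surj {k : Type*} [Field k]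
    (a d b : DualNumber k) (hd : IsUnit d)
    (g : GL (Fin 2) (DualNumber k))
    (hg : (g : Matrix (Fin 2) (Fin 2) (DualNumber k)) = !![a, b; 0, d])
    (hafst : fst a = fst d) (hb : IsUnit b)
    (V : Submodule (DualNumber k) (Fin 2 → DualNumber k)) (hV : V ∈ Fib g) :
    ∃ c : k, fibAux c = V := by
  obtain ⟨⟨v, hv, hVspan⟩, hmap⟩ := hV
  have hbf : fst b ≠ 0 := by
    rw [isUnit_iff_isUnit_fst, isUnit_iff_ne_zero] at hb; exact hb
  have hdf : fst d ≠ 0 := by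
    rw [isUnit_iff_isUnit_fst, isUnit_iff_ne_zero] at hd; exact hd
  -- first coordinate of v is a unit
  have hx : IsUnit (v 0) := by
    rw [isUnit_iff_isUnit_fst, isUnit_iff_ne_zero]
    intro h0
    have h1 : fst (v 1) ≠ 0 := by
      intro h1
      refine hv ⟨![inl (snd (v 0)), inl (snd (v 1))], ?_⟩
      funext i
      fin_cases i <;> refine TrivSqZeroExt.ext ?_ ?_ <;> simp [h0, h1]
    -- g·v ∈ V = span {v}
    have hvmem : v ∈ V := hVspan ▸ Submodule.mem_span_singleton_self _
    have hgv : (g : Matrix (Fin 2) (Fin 2) (DualNumber k)).mulVecLin v ∈ V := by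
      rw [← hmap]; exact Submodule.mem_map_of_mem hvmem
    rw [hVspan] at hgv
    obtain ⟨lam, hlam⟩ := Submodule.mem_span_singleton.mp hgv
    have e1 := congrFun hlam 1
    have e0 := congrFun hlam 0
    simp [hg, Matrix.mulVec, dotProduct, Fin.sum_univ_two] at e0 e1
    -- e1 : lam * v 1 = d * v 1 ; v 1 unit so lam = d
    have hy : IsUnit (v 1) := by
      rw [isUnit_iff_isUnit_fst, isUnit_iff_ne_zero]; exact h1
    have hlamd : lam = d := hy.mul_right_cancel e1
    rw [hlamd] at e0
    -- e0 : d * v 0 = a * v 0 + b * v 1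
    have := congrArg fst e0
    simp [h0, hbf, h1] at this
  -- normalize so first coordinate is 1
  obtain ⟨u, hu⟩ := hx
  set v' : Fin 2 → DualNumber k := ((u⁻¹ : (DualNumber k)ˣ) : DualNumber k) • v with hv'
  have hv'0 : v' 0 = 1 := by simp [hv', hu, Pi.smul_apply]
  have hVspan' : V = Submodule.span (DualNumber k) {v'} := by
    rw [hVspan, hv', Submodule.span_singleton_smul_eq (Units.isUnit _) _]
  have hv'mem : v' ∈ V := hVspan' ▸ Submodule.mem_span_singleton_self _
  have hgv : (g : Matrix (Fin 2) (Fin 2) (DualNumber k)).mulVecLin v' ∈ V := by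
    rw [← hmap]; exact Submodule.mem_map_of_mem hv'mem
  rw [hVspan'] at hgv
  obtain ⟨lam, hlam⟩ := Submodule.mem_span_singleton.mp hgv
  have e0 := congrFun hlam 0
  have e1 := congrFun hlam 1
  simp [hg, Matrix.mulVec, dotProduct, Fin.sum_univ_two, hv'0] at e0 e1
  -- e0 : lam = a * 1 + b * v' 1 ; e1 : lam * v' 1 = d * v' 1
  rw [e0] at e1
  -- take fst of e1
  have hfst := congrArg fst e1
  simp only [fst_mul, fst_add, fst_one, mul_one] at hfst
  -- hfst : (fst a + fst b * fst (v' 1)) * fst (v' 1) = fst d * fst (v' 1)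
  have ht : fst (v' 1) = 0 := by
    by_contra ht
    have h2 := mul_right_cancel₀ ht hfst
    rw [hafst, add_eq_left] at h2
    exact ht ((mul_eq_zero.mp h2).resolve_left hbf)
  have hv'eq : v' = ![1, inr (snd (v' 1))] := by
    funext i
    fin_cases i
    · simpa using hv'0
    · exact TrivSqZeroExt.ext (by simp [ht]) (by simp)
  exact ⟨snd (v' 1), by rw [fibAux, hVspan']; rw [← hv'eq]⟩

/-- Case 2: over `k = 𝔽_q`, if `g` is upper triangular with unit diagonal
entries `a, d` and upper-right entry `b`, with `a − d ∈ εA` and `b` a unit, then `Fib g`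
has exactly `q` elements. -/
theorem fib_card_case_two {k : Type*} [Field k] [Fintype k]
    (a d b : DualNumber k) (ha : IsUnit a) (hd : IsUnit d)
    (g : GL (Fin 2) (DualNumber k))
    (hg : (g : Matrix (Fin 2) (Fin 2) (DualNumber k)) = !![a, b; 0, d])
    (had : ∃ z : DualNumber k, a - d = (ε : DualNumber k) * z)
    (hb : IsUnit b) :
    Nat.card (Fib g) = Fintype.card k := by
  obtain ⟨z, hz⟩ := had
  have hafst : TrivSqZeroExt.fst a = TrivSqZeroExt.fst d := by
    have := congrArg TrivSqZeroExt.fst hz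
    simpa [sub_eq_zero] using this
  let F : k → (Fib g) := fun c => ⟨fibAux c, fibAux_mem a d b ha g hg hafst c⟩
  have hFbij : Function.Bijective F := by
    constructor
    · intro c c' h
      exact fibAux_inj (congrArg Subtype.val h)
    · rintro ⟨V, hV⟩
      obtain ⟨c, hc⟩ := fibAux_surj a d b hd g hg hafst hb V hV
      exact ⟨c, Subtype.ext hc⟩
  rw [← Nat.card_eq_of_bijective F hFbij, Nat.card_eq_fintype_card]
end

section
/- Let k = 𝔽_q be the finite field with q elements and let g ∈ GL₂(A) be the upper triangular matrix with diagonal entries a, d ∈ Aˣ and upper-right entry b ∈ A. If a − d ∈ εA ∖ {0} and b ∈ εA, then Fib(g) has exactly 2q elements. -/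
open Matrix
open scoped DualNumber

/-!
Every free line of `A²` has a unique generator of the form `(x, 1)` with `x ∈ A`
or `(1, εt)` with `t ∈ k`. For `g = [[a, b], [0, d]]` the line through `(x, 1)` is stable iff
`(a - d)x + b = 0`, and the line through `(1, εt)` iff `(a - d)εt = 0`. When `a - d = εz`
with `z ∉ εA` and `b = εw`, the first condition fixes `x mod ε = -w/z` and leaves `x`'s
`ε`-part free, while the second always holds: `q + q` stable lines.
-/

open TrivSqZeroExt Submodule

namespace DualNumber

variable {k : Type*} [Field k]

instance [Finite k] : Finite (DualNumber k) := inferInstanceAs (Finite (k × k))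

lemma eps_mul_eq_inr (x : DualNumber k) : ε * x = inr x.fst := by
  ext <;> simp

lemma eps_mul_mul_inr (z : DualNumber k) (t : k) : ε * z * inr t = 0 := by
  rw [eps_mul_eq_inr, inr_mul_inr]

lemma exists_eq_eps_smul_iff {v : Fin 2 → DualNumber k} :
    (∃ u, v = (ε : DualNumber k) • u) ↔ (v 0).fst = 0 ∧ (v 1).fst = 0 := by
  constructor
  · rintro ⟨u, rfl⟩
    simp [eps_mul_eq_inr]
  · rintro ⟨h0, h1⟩
    refine ⟨![inl (v 0).snd, inl (v 1).snd], funext fun i => ?_⟩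
    fin_cases i <;> ext <;> simp [h0, h1]

/-- The standard generators of the points of `ℙ¹(k[ε])`: `(x, 1)` and `(1, εt)`. -/
def projVec : DualNumber k ⊕ k → Fin 2 → DualNumber k
  | .inl x => ![x, 1]
  | .inr t => ![1, inr t]

def projLine (p : DualNumber k ⊕ k) : Submodule (DualNumber k) (Fin 2 → DualNumber k) :=
  span (DualNumber k) {projVec p}

lemma projVec_not_eq_eps_smul (p : DualNumber k ⊕ k) :
    ¬ ∃ u, projVec p = (ε : DualNumber k) • u := by
  rw [exists_eq_eps_smul_iff]
  rcases p with x | t <;> simp [projVec]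

lemma exists_projLine_eq_span {v : Fin 2 → DualNumber k}
    (hv : ¬ ∃ u, v = (ε : DualNumber k) • u) : ∃ p, projLine p = span (DualNumber k) {v} := by
  by_cases h1 : (v 1).fst = 0
  · have h0 : (v 0).fst ≠ 0 := fun h0 => hv (exists_eq_eps_smul_iff.mpr ⟨h0, h1⟩)
    obtain ⟨u, hu⟩ := isUnit_iff_isUnit_fst.mpr (isUnit_iff_ne_zero.mpr h0)
    refine ⟨.inr (u⁻¹ • v 1).snd, ?_⟩
    have : projVec (.inr (u⁻¹ • v 1).snd) = u⁻¹ • v := by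
      refine funext fun i => ?_
      fin_cases i
      · simp [projVec, Units.smul_def, ← hu]
      · ext <;> simp [projVec, Units.smul_def, h1]
    rw [projLine, this, span_singleton_group_smul_eq]
  · obtain ⟨u, hu⟩ := isUnit_iff_isUnit_fst.mpr (isUnit_iff_ne_zero.mpr h1)
    refine ⟨.inl (u⁻¹ • v 0), ?_⟩
    have : projVec (.inl (u⁻¹ • v 0)) = u⁻¹ • v :=
      funext <| Fin.forall_fin_two.mpr ⟨rfl, by simp [projVec, Units.smul_def, ← hu]⟩
    rw [projLine, this, span_singleton_group_smul_eq]

lemma isFreeRankOne_iff_mem_range_projLine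
    {V : Submodule (DualNumber k) (Fin 2 → DualNumber k)} :
    IsFreeRankOne V ↔ V ∈ Set.range projLine := by
  constructor
  · rintro ⟨v, hv, rfl⟩
    exact exists_projLine_eq_span hv
  · rintro ⟨p, rfl⟩
    exact ⟨_, projVec_not_eq_eps_smul p, rfl⟩

lemma projLine_injective : Function.Injective (projLine (k := k)) := by
  intro p p' h
  have hmem : projVec p ∈ projLine p' := h ▸ mem_span_singleton_self (projVec p)
  obtain ⟨c, hc⟩ := mem_span_singleton.mp hmem
  have h0 := congrFun hc 0
  have h1 := congrFun hc 1
  rcases p with x | t <;> rcases p' with x' | t' <;>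
    simp only [projVec, Pi.smul_apply, smul_eq_mul, cons_val_zero, cons_val_one, cons_val_fin_one,
      mul_one] at h0 h1
  · rw [← h0, h1, one_mul]
  · simpa using congrArg fst h1
  · simpa [h1] using congrArg fst h0
  · rw [h0, one_mul] at h1
    rw [inr_injective h1]

lemma map_mulVecLin_projLine (M : Matrix (Fin 2) (Fin 2) (DualNumber k)) (p : DualNumber k ⊕ k) :
    map M.mulVecLin (projLine p) = span (DualNumber k) {M *ᵥ projVec p} := by
  rw [projLine, map_span, Set.image_singleton, mulVecLin_apply]

lemma map_projLine_inl_eq_iff {a b d : DualNumber k} (hd : IsUnit d) (x : DualNumber k) :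
    map (!![a, b; 0, d]).mulVecLin (projLine (.inl x)) = projLine (.inl x) ↔
      (a - d) * x + b = 0 := by
  have hMv : !![a, b; 0, d] *ᵥ projVec (.inl x) = ![a * x + b, d] := by
    refine funext fun i => ?_
    fin_cases i <;> simp [projVec, mulVec, dotProduct, Fin.sum_univ_two]
  rw [map_mulVecLin_projLine, hMv]
  constructor
  · intro h
    have hmem : ![a * x + b, d] ∈ projLine (.inl x) := h ▸ mem_span_singleton_self _
    obtain ⟨c, hc⟩ := mem_span_singleton.mp hmem
    have h0 := congrFun hc 0
    have h1 := congrFun hc 1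
    simp only [projVec, Pi.smul_apply, smul_eq_mul, cons_val_zero, cons_val_one,
      cons_val_fin_one, mul_one] at h0 h1
    linear_combination x * h1 - h0
  · intro h
    have : ![a * x + b, d] = d • projVec (.inl x) := by
      refine funext <| Fin.forall_fin_two.mpr ⟨?_, by simp [projVec]⟩
      simp only [projVec, Pi.smul_apply, smul_eq_mul, cons_val_zero]
      linear_combination h
    rw [this, span_singleton_smul_eq hd, projLine]

lemma map_projLine_inr_eq_iff {a b d : DualNumber k} (ha : IsUnit a) (t : k) :
    map (!![a, b; 0, d]).mulVecLin (projLine (.inr t)) = projLine (.inr t) ↔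
      (a - d) * inr t = 0 := by
  have hMv : !![a, b; 0, d] *ᵥ projVec (.inr t) = ![a + b * inr t, d * inr t] := by
    refine funext fun i => ?_
    fin_cases i <;> simp [projVec, mulVec, dotProduct, Fin.sum_univ_two]
  have hsq : (inr t * inr t : DualNumber k) = 0 := inr_mul_inr _ _ _
  rw [map_mulVecLin_projLine, hMv]
  constructor
  · intro h
    have hmem : ![a + b * inr t, d * inr t] ∈ projLine (.inr t) := h ▸ mem_span_singleton_self _
    obtain ⟨c, hc⟩ := mem_span_singleton.mp hmem
    have h0 := congrFun hc 0
    have h1 := congrFun hc 1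
    simp only [projVec, Pi.smul_apply, smul_eq_mul, cons_val_zero, cons_val_one,
      cons_val_fin_one, mul_one] at h0 h1
    linear_combination h1 - inr t * h0 - b * hsq
  · intro h
    have : ![a + b * inr t, d * inr t] = (a + b * inr t) • projVec (.inr t) := by
      refine funext <| Fin.forall_fin_two.mpr ⟨by simp [projVec], ?_⟩
      simp only [projVec, Pi.smul_apply, smul_eq_mul, cons_val_one, cons_val_fin_one]
      linear_combination -h - b * hsq
    have hunit : IsUnit (a + b * inr t) := by
      rw [isUnit_iff_isUnit_fst] at ha ⊢
      simpa using ha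
    rw [this, span_singleton_smul_eq hunit, projLine]

lemma fib_eq_image_projLine (g : GL (Fin 2) (DualNumber k)) :
    Fib g = projLine ''
      {p | map (g : Matrix (Fin 2) (Fin 2) (DualNumber k)).mulVecLin (projLine p) = projLine p} := by
  ext V
  simp only [Fib, isFreeRankOne_iff_mem_range_projLine, Set.mem_ofPred_eq, Set.mem_image,
    Set.mem_range]
  constructor
  · rintro ⟨⟨p, rfl⟩, h⟩
    exact ⟨p, h, rfl⟩
  · rintro ⟨p, h, rfl⟩
    exact ⟨⟨p, rfl⟩, h⟩

lemma card_fib [Finite k] (g : GL (Fin 2) (DualNumber k)) :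
    Nat.card (Fib g) =
      Nat.card {x // map (g : Matrix (Fin 2) (Fin 2) (DualNumber k)).mulVecLin
        (projLine (.inl x)) = projLine (.inl x)} +
      Nat.card {t // map (g : Matrix (Fin 2) (Fin 2) (DualNumber k)).mulVecLin
        (projLine (.inr t)) = projLine (.inr t)} := by
  rw [fib_eq_image_projLine, Nat.card_image_of_injective projLine_injective, ← Nat.card_sum]
  exact Nat.card_congr Equiv.subtypeSum

lemma eps_mul_mul_add_eps_mul_eq_zero_iff {z w : DualNumber k} (hz : z.fst ≠ 0)
    (x : DualNumber k) : ε * z * x + ε * w = 0 ↔ x.fst = -w.fst / z.fst := by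
  rw [mul_assoc, eps_mul_eq_inr, eps_mul_eq_inr, ← inr_add, ← inr_zero, inr_injective.eq_iff,
    fst_mul, eq_div_iff hz, add_eq_zero_iff_eq_neg, mul_comm]

lemma card_fst_eq (c : k) : Nat.card {x : DualNumber k // x.fst = c} = Nat.card k :=
  Nat.card_congr
    { toFun := fun x => x.1.snd
      invFun := fun t => ⟨inl c + inr t, by simp⟩
      left_inv := fun x => by ext <;> simp [x.2]
      right_inv := fun t => by simp }

end DualNumber

open DualNumber

/-- Case 3: over `k = 𝔽_q`, if `g` is upper triangular with unit diagonal
entries `a, d` and upper-right entry `b`, with `a − d ∈ εA ∖ {0}` and `b ∈ εA`, then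
`Fib g` has exactly `2q` elements. -/
theorem fib_card_case_three {k : Type*} [Field k] [Fintype k]
    (a d b : DualNumber k) (ha : IsUnit a) (hd : IsUnit d)
    (g : GL (Fin 2) (DualNumber k))
    (hg : (g : Matrix (Fin 2) (Fin 2) (DualNumber k)) = !![a, b; 0, d])
    (had : ∃ z : DualNumber k, a - d = (ε : DualNumber k) * z)
    (had' : a - d ≠ 0)
    (hb : ∃ z : DualNumber k, b = (ε : DualNumber k) * z) :
    Nat.card (Fib g) = 2 * Fintype.card k := by
  obtain ⟨z, hz⟩ := had
  obtain ⟨w, rfl⟩ := hb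
  have hz0 : z.fst ≠ 0 := fun h => had' (by rw [hz, eps_mul_eq_inr, h, inr_zero])
  simp only [card_fib, hg, map_projLine_inl_eq_iff hd, map_projLine_inr_eq_iff ha, hz,
    eps_mul_mul_inr, eps_mul_mul_add_eps_mul_eq_zero_iff hz0, card_fst_eq]
  rw [Nat.card_congr (Equiv.subtypeUnivEquiv fun _ => trivial), Nat.card_eq_fintype_card, two_mul]
end

section
/- Let k be an algebraically closed field, n ≥ 1, and m ≥ 1 an integer that is invertible in k (i.e., the characteristic of k does not divide m). Let T ≤ GL_n(k) be the subgroup of invertible diagonal matrices, and let GL_n(k)/T denote the set of left cosets xT. Let g ∈ GL_n(k) be regular semisimple, i.e., the characteristic polynomial of g has n distinct roots in k. Then the set {(t, xT) ∈ T × GL_n(k)/T : x⁻¹·g·x = t^m} is finite with exactly n!·m^n elements. (The condition x⁻¹gx = t^m is independent of the choice of coset representative x, since T is commutative.) -/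
open Matrix

variable (R : Type*) [CommRing R] (n : ℕ)

/-- The subgroup of `GL n R` of invertible upper triangular matrices. -/
def upperTriangularSubgroup : Subgroup (GL (Fin n) R) where
  carrier := {g | ((g : Matrix (Fin n) (Fin n) R)).BlockTriangular id}
  one_mem' := Matrix.blockTriangular_one
  mul_mem' := by
    intro g h hg hh
    exact hg.mul hh
  inv_mem' := by
    intro g hg
    show ((g⁻¹ : GL (Fin n) R) : Matrix (Fin n) (Fin n) R).BlockTriangular id
    rw [Matrix.coe_units_inv]
    letI := g.invertible
    exact Matrix.blockTriangular_inv_of_blockTriangular hg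

/-- The subgroup of `GL n R` of invertible diagonal matrices. -/
def diagonalSubgroup : Subgroup (GL (Fin n) R) where
  carrier := {g | ∀ i j : Fin n, i ≠ j → (g : Matrix (Fin n) (Fin n) R) i j = 0}
  one_mem' := fun i j hij => Matrix.one_apply_ne hij
  mul_mem' := by
    intro g h hg hh i j hij
    show ∑ l, (g : Matrix (Fin n) (Fin n) R) i l * (h : Matrix (Fin n) (Fin n) R) l j = 0
    refine Finset.sum_eq_zero fun l _ => ?_
    rcases eq_or_ne i l with rfl | hil
    · rw [hh i j hij, mul_zero]
    · rw [hg i l hil, zero_mul]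
  inv_mem' := by
    intro g hg i j hij
    letI := g.invertible
    have hupper : ((g : Matrix (Fin n) (Fin n) R)).BlockTriangular (id : Fin n → Fin n) :=
      fun i j hij => hg i j (by exact fun h => absurd h.symm (ne_of_lt hij))
    have hlower : ((g : Matrix (Fin n) (Fin n) R)).BlockTriangular
        (fun i : Fin n => OrderDual.toDual i) := fun a b hab =>
      hg a b (ne_of_lt (OrderDual.toDual_lt_toDual.mp hab))
    have h1 := Matrix.blockTriangular_inv_of_blockTriangular hupper
    have h2 := Matrix.blockTriangular_inv_of_blockTriangular hlower
    show ((g⁻¹ : GL (Fin n) R) : Matrix (Fin n) (Fin n) R) i j = 0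
    rw [Matrix.coe_units_inv]
    rcases lt_or_gt_of_ne hij with h | h
    · exact h2 (OrderDual.toDual_lt_toDual.mpr h)
    · exact h1 h

/-!
Let `μ` be the (distinct) eigenvalues of `g`. If `x⁻¹ g x = tᵐ` with `t` diagonal, then `tᵐ`
has the same characteristic polynomial as `g`, so its diagonal is `μ ∘ σ` for a unique
permutation `σ`. Conversely, for every `σ` the matrix whose columns are eigenvectors for
`μ (σ 1), …, μ (σ n)` conjugates `g` to `diag (μ ∘ σ)`, and any two such matrices differ by an
element of `T`, because the centralizer of a diagonal matrix with distinct entries consists of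
diagonal matrices. Hence a pair `(t, xT)` amounts to a permutation `σ` together with `m`-th
roots `tᵢ` of the `μ (σ i)`, and each nonzero `μ (σ i)` has exactly `m` of them since
`Xᵐ - μ (σ i)` is separable.
-/

open Polynomial

theorem Polynomial.isRoot_prod_X_sub_C_iff {ι k : Type*} [Fintype ι] [Field k] (s : ι → k)
    (a : k) : (∏ i, (X - C (s i))).IsRoot a ↔ ∃ i, s i = a := by
  simp only [isRoot_prod, root_X_sub_C, Finset.mem_univ, true_and]

theorem Polynomial.exists_perm_of_prod_X_sub_C_eq {ι k : Type*} [Fintype ι] [Field k]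
    {e μ : ι → k} (hμ : Function.Injective μ)
    (h : ∏ i, (X - C (e i)) = ∏ i, (X - C (μ i))) :
    ∃ σ : Equiv.Perm ι, ∀ i, e i = μ (σ i) := by
  choose σ hσ using fun i =>
    (isRoot_prod_X_sub_C_iff μ (e i)).mp (h ▸ (isRoot_prod_X_sub_C_iff e _).mpr ⟨i, rfl⟩)
  have hσ_surj : Function.Surjective σ := fun j => by
    obtain ⟨i, hi⟩ :=
      (isRoot_prod_X_sub_C_iff e (μ j)).mp (h ▸ (isRoot_prod_X_sub_C_iff μ _).mpr ⟨j, rfl⟩)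
    exact ⟨i, hμ (by rw [hσ, hi])⟩
  exact ⟨Equiv.ofBijective σ (Finite.surjective_iff_bijective.mp hσ_surj),
    fun i => (hσ i).symm⟩

theorem IsAlgClosed.card_units_pow_eq {k : Type*} [Field k] [IsAlgClosed k] {m : ℕ}
    (hm : (m : k) ≠ 0) {a : k} (ha : a ≠ 0) : Nat.card {c : kˣ // (c : k) ^ m = a} = m := by
  have hm_pos : 0 < m := Nat.pos_of_ne_zero (by rintro rfl; exact hm Nat.cast_zero)
  have hnodup : (nthRoots m a).Nodup := nodup_roots (separable_X_pow_sub_C a hm ha)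
  have hcard : Multiset.card (nthRoots m a) = m := by
    rw [nthRoots, splits_iff_card_roots.mp (IsAlgClosed.splits _), natDegree_X_pow_sub_C]
  let e : {c : kˣ // (c : k) ^ m = a} ≃ {c // c ∈ nthRootsFinset m a} :=
    { toFun := fun c => ⟨c.1, (mem_nthRootsFinset hm_pos a).mpr c.2⟩
      invFun := fun c => ⟨Units.mk0 c.1 fun h => ha <| by
          rw [← (mem_nthRootsFinset hm_pos a).mp c.2, h, zero_pow hm_pos.ne'],
        (mem_nthRootsFinset hm_pos a).mp c.2⟩
      left_inv := fun c => by ext; rfl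
      right_inv := fun c => rfl }
  classical
  rw [Nat.card_congr e, Nat.card_eq_finsetCard, nthRootsFinset_def,
    Multiset.toFinset_card_of_nodup hnodup, hcard]

namespace Matrix

variable {ι k : Type*} [Fintype ι] [DecidableEq ι] [Field k]

theorem exists_units_conj_eq_diagonal {A : Matrix ι ι k} {μ : ι → k}
    (hμ : Function.Injective μ) (hroot : ∀ i, A.charpoly.IsRoot (μ i)) :
    ∃ P : GL ι k, ((P⁻¹ : GL ι k) : Matrix ι ι k) * A * P = diagonal μ := by
  have hev (i : ι) : ∃ v, Module.End.HasEigenvector (toLin' A) (μ i) v := by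
    have hi := hroot i
    rw [← charpoly_toLin', ← Module.End.hasEigenvalue_iff_isRoot_charpoly] at hi
    exact hi.exists_hasEigenvector
  choose v hv using hev
  let P : Matrix ι ι k := (of v)ᵀ
  have hP : IsUnit P :=
    linearIndependent_cols_iff_isUnit.mp (Module.End.eigenvectors_linearIndependent' _ μ hμ v hv)
  have hAP : A * P = P * diagonal μ := by
    ext a j
    rw [mul_diagonal]
    simpa [P, mul_apply, mulVec, dotProduct, mul_comm] using congrFun (hv j).apply_eq_smul a
  refine ⟨hP.unit, ?_⟩
  rw [coe_units_inv, IsUnit.unit_spec, mul_assoc, hAP, ← mul_assoc,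
    nonsing_inv_mul _ ((isUnit_iff_isUnit_det P).mp hP), one_mul]

theorem charpoly_coe_inv_mul_mul {R : Type*} [CommRing R] (P : GL ι R) (A : Matrix ι ι R) :
    (((P⁻¹ : GL ι R) : Matrix ι ι R) * A * P).charpoly = A.charpoly := by
  rw [coe_units_inv, charpoly_units_conj']

theorem isDiag_of_commute_diagonal {R : Type*} [CommRing R] [NoZeroDivisors R] {d : ι → R}
    (hd : Function.Injective d) {Z : Matrix ι ι R} (hZ : Commute Z (diagonal d)) : Z.IsDiag := by
  intro i j hij
  have h := congr_fun₂ hZ.eq i j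
  rw [mul_diagonal, diagonal_mul] at h
  have : Z i j * (d j - d i) = 0 := by linear_combination h
  exact (mul_eq_zero.mp this).resolve_right (sub_ne_zero.mpr (hd.ne hij.symm))

end Matrix

theorem QuotientGroup.mk_eq_mk_of_conj_eq {G : Type*} [Group G] {H : Subgroup G} {g x y : G}
    (hxy : x⁻¹ * g * x = y⁻¹ * g * y) (hH : Subgroup.centralizer {x⁻¹ * g * x} ≤ H) :
    (x : G ⧸ H) = y := by
  refine QuotientGroup.eq.mpr (hH (Subgroup.mem_centralizer_singleton_iff.mpr ?_))
  conv_lhs => rw [hxy]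
  group

section DiagonalTorus

variable {ι : Type*} [Fintype ι] [DecidableEq ι]

def diagonalUnits : (ι → Rˣ) →* GL ι R :=
  (Units.map (diagonalRingHom ι R).toMonoidHom).comp MulEquiv.piUnits.symm.toMonoidHom

@[simp]
theorem coe_diagonalUnits (d : ι → Rˣ) :
    (diagonalUnits R d : Matrix ι ι R) = diagonal fun i => (d i : R) := rfl

theorem coe_diagonalUnits_pow (d : ι → Rˣ) (m : ℕ) :
    ((diagonalUnits R d ^ m : GL ι R) : Matrix ι ι R) = diagonal fun i => (d i : R) ^ m := by
  rw [← map_pow, coe_diagonalUnits]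
  rfl

theorem diagonalUnits_injective : Function.Injective (diagonalUnits (ι := ι) R) := by
  intro d d' h
  funext i
  ext
  simpa using congrArg (fun u : GL ι R => (u : Matrix ι ι R) i i) h

theorem range_diagonalUnits : (diagonalUnits R).range = diagonalSubgroup R n := by
  ext t
  constructor
  · rintro ⟨d, rfl⟩
    exact isDiag_diagonal _
  · intro ht
    have hdiag : diagonal (diag (t : Matrix (Fin n) (Fin n) R)) = t := IsDiag.diagonal_diag ht
    have hunit : IsUnit (diag (t : Matrix (Fin n) (Fin n) R)) := by
      rw [← isUnit_diagonal, hdiag]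
      exact t.isUnit
    refine ⟨fun i => (Pi.isUnit_iff.mp hunit i).unit, Units.ext ?_⟩
    simp only [coe_diagonalUnits, IsUnit.unit_spec]
    exact hdiag

theorem centralizer_le_diagonalSubgroup [NoZeroDivisors R] {t : GL (Fin n) R} {d : Fin n → R}
    (hd : Function.Injective d) (ht : (t : Matrix (Fin n) (Fin n) R) = diagonal d) :
    Subgroup.centralizer {t} ≤ diagonalSubgroup R n := fun _ hz =>
  isDiag_of_commute_diagonal hd
    (ht ▸ congrArg Units.val (Subgroup.mem_centralizer_singleton_iff.mp hz))

end DiagonalTorus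

section PowConjPairs

variable {k : Type*} [Field k] {n : ℕ}

def powConjPairs (m : ℕ) (g : GL (Fin n) k) :
    Set (diagonalSubgroup k n × (GL (Fin n) k ⧸ diagonalSubgroup k n)) :=
  {p | ∃ x : GL (Fin n) k, (x : GL (Fin n) k ⧸ diagonalSubgroup k n) = p.2 ∧
    x⁻¹ * g * x = (p.1 : GL (Fin n) k) ^ m}

abbrev PermRoots (m : ℕ) (μ : Fin n → k) :=
  Σ σ : Equiv.Perm (Fin n), Π i, {c : kˣ // (c : k) ^ m = μ (σ i)}

theorem card_permRoots [IsAlgClosed k] {m : ℕ} (hm : (m : k) ≠ 0) {μ : Fin n → k}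
    (hμ : ∀ i, μ i ≠ 0) : Nat.card (PermRoots m μ) = n.factorial * m ^ n := by
  have hcard (σ : Equiv.Perm (Fin n)) (i : Fin n) :
      Nat.card {c : kˣ // (c : k) ^ m = μ (σ i)} = m :=
    IsAlgClosed.card_units_pow_eq hm (hμ (σ i))
  have (σ : Equiv.Perm (Fin n)) (i : Fin n) : Finite {c : kˣ // (c : k) ^ m = μ (σ i)} :=
    Nat.finite_of_card_ne_zero (by rw [hcard]; rintro rfl; exact hm Nat.cast_zero)
  simp [Nat.card_sigma, Nat.card_pi, hcard, Fintype.card_perm]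

variable {g : GL (Fin n) k} {μ : Fin n → k} (x : Equiv.Perm (Fin n) → GL (Fin n) k)
  (hx : ∀ σ, (((x σ)⁻¹ : GL (Fin n) k) : Matrix (Fin n) (Fin n) k) * g * x σ =
    diagonal (μ ∘ σ))

def permRootsToPowConjPairs (m : ℕ) : PermRoots m μ → powConjPairs m g := fun r =>
  ⟨(⟨diagonalUnits k fun i => (r.2 i : kˣ), range_diagonalUnits k n ▸ ⟨_, rfl⟩⟩,
      x r.1),
    x r.1, rfl, Units.ext <| by
      rw [Units.val_mul, Units.val_mul, hx, coe_diagonalUnits_pow]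
      exact congrArg diagonal (funext fun i => (r.2 i).2.symm)⟩

theorem permRootsToPowConjPairs_injective (m : ℕ) (hμ : Function.Injective μ) :
    Function.Injective (permRootsToPowConjPairs x hx m) := by
  rintro ⟨σ, r⟩ ⟨τ, s⟩ h
  have hrs : (fun i => (r i : kˣ)) = fun i => (s i : kˣ) :=
    diagonalUnits_injective k (congrArg (fun p => (p.1.1 : GL (Fin n) k)) (Subtype.ext_iff.mp h))
  obtain rfl : σ = τ := Equiv.ext fun i => hμ <| by
    rw [← (r i).2, ← (s i).2, congr_fun hrs i]
  congr
  exact funext fun i => Subtype.ext (congr_fun hrs i)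

theorem permRootsToPowConjPairs_surjective (m : ℕ) (hμ : Function.Injective μ)
    (hg : (g : Matrix (Fin n) (Fin n) k).charpoly = ∏ i, (X - C (μ i))) :
    Function.Surjective (permRootsToPowConjPairs x hx m) := by
  rintro ⟨⟨⟨t, ht⟩, c⟩, y, hyc, hy⟩
  obtain ⟨u, rfl⟩ : t ∈ (diagonalUnits k).range := (range_diagonalUnits k n).symm ▸ ht
  have hyu : ((y⁻¹ : GL (Fin n) k) : Matrix (Fin n) (Fin n) k) * g * y =
      diagonal fun i => (u i : k) ^ m := by
    rw [← Units.val_mul, ← Units.val_mul, hy, coe_diagonalUnits_pow]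
  obtain ⟨σ, hσ⟩ : ∃ σ : Equiv.Perm (Fin n), ∀ i, (u i : k) ^ m = μ (σ i) := by
    refine exists_perm_of_prod_X_sub_C_eq hμ ?_
    rw [← charpoly_diagonal, ← hyu, charpoly_coe_inv_mul_mul, hg]
  have hxy : (x σ)⁻¹ * g * x σ = y⁻¹ * g * y := Units.ext <| by
    simp only [Units.val_mul]
    rw [hx, hyu]
    exact congrArg diagonal (funext fun i => (hσ i).symm)
  refine ⟨⟨σ, fun i => ⟨u i, hσ i⟩⟩, Subtype.ext (Prod.ext rfl ?_)⟩
  refine (QuotientGroup.mk_eq_mk_of_conj_eq hxy ?_).trans hyc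
  exact centralizer_le_diagonalSubgroup k n (hμ.comp σ.injective)
    (by rw [Units.val_mul, Units.val_mul, hx])

end PowConjPairs

open Polynomial in
theorem card_torus_mth_roots_fiber_general (k : Type*) [Field k] [IsAlgClosed k]
    (n m : ℕ) (hminv : (m : k) ≠ 0)
    (g : GL (Fin n) k)
    (hreg : ∃ μ : Fin n → k, Function.Injective μ ∧
      Matrix.charpoly (g : Matrix (Fin n) (Fin n) k) = ∏ i : Fin n, (X - C (μ i))) :
    Nat.card {p : diagonalSubgroup k n × (GL (Fin n) k ⧸ diagonalSubgroup k n) //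
        ∃ x : GL (Fin n) k, (x : GL (Fin n) k ⧸ diagonalSubgroup k n) = p.2 ∧
          x⁻¹ * g * x = (p.1 : GL (Fin n) k) ^ m} =
      Nat.factorial n * m ^ n := by
  obtain ⟨μ, hμ, hg⟩ := hreg
  choose x hx using fun σ : Equiv.Perm (Fin n) =>
    exists_units_conj_eq_diagonal (hμ.comp σ.injective) fun i => by
      rw [hg, isRoot_prod_X_sub_C_iff]
      exact ⟨σ i, rfl⟩
  have hμ0 (i : Fin n) : μ i ≠ 0 := by
    have hunit : IsUnit (diagonal (μ ∘ (1 : Equiv.Perm (Fin n)))) := by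
      rw [← hx 1]
      exact ((x 1)⁻¹ * g * x 1).isUnit
    exact (Pi.isUnit_iff.mp (isUnit_diagonal.mp hunit) i).ne_zero
  rw [← card_permRoots hminv hμ0]
  exact Nat.card_congr (Equiv.ofBijective _ ⟨permRootsToPowConjPairs_injective x hx m hμ,
    permRootsToPowConjPairs_surjective x hx m hμ hg⟩).symm

open Polynomial in
/-- over an algebraically closed field `k`, for `m ≥ 1` invertible in `k`
and a regular semisimple `g ∈ GL_n(k)` (characteristic polynomial with `n` distinct roots),
the set `{(t, xT) ∈ T × GL_n(k)/T : x⁻¹gx = tᵐ}` has exactly `n!·mⁿ` elements, where `T` is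
the diagonal subgroup. -/
theorem card_torus_mth_roots_fiber (k : Type*) [Field k] [IsAlgClosed k]
    (n m : ℕ) (hn : 1 ≤ n) (hm : 1 ≤ m) (hminv : (m : k) ≠ 0)
    (g : GL (Fin n) k)
    (hreg : ∃ μ : Fin n → k, Function.Injective μ ∧
      Matrix.charpoly (g : Matrix (Fin n) (Fin n) k) = ∏ i : Fin n, (X - C (μ i))) :
    Nat.card {p : diagonalSubgroup k n × (GL (Fin n) k ⧸ diagonalSubgroup k n) //
        ∃ x : GL (Fin n) k, (x : GL (Fin n) k ⧸ diagonalSubgroup k n) = p.2 ∧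
          x⁻¹ * g * x = (p.1 : GL (Fin n) k) ^ m} =
      Nat.factorial n * m ^ n :=
  card_torus_mth_roots_fiber_general k n m hminv g hreg
end
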